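/- arXiv:2301.02599 — 2 statements merged into one kernel-verified Lean document; each statement's English description precedes it below -/
import Mathlib

section
/- For every real x > 1, one has (x - 1)·x^{x/(x-1)} / (e · log x) ≤ ((x + 1)/2)². -/
/-!
With `u = log x / (x - 1)` the left-hand side is `x · e^(u-1) / u`, and `0 < u < 1`.
Bound `e^(u-1) ≤ 1 / (2 - u)` (tangent line of `exp` at `0`, applied to `1 - u`), so it remains to
show `4x / (x+1)² ≤ u (2 - u) = 1 - (1 - u)²`. This follows from `1 - u ≤ (x-1)/(x+1)`, i.e. from
the first term of the series `log x = 2 ∑ t^(2k+1)/(2k+1)`, `t = (x-1)/(x+1)`.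
-/

open Real

lemma two_mul_sub_one_div_add_one_le_log {x : ℝ} (hx : 1 ≤ x) :
    2 * (x - 1) / (x + 1) ≤ log x := by
  have hsum := hasSum_log_one_add (sub_nonneg.mpr hx)
  rw [add_sub_cancel] at hsum
  have hfirst := le_hasSum hsum 0 fun k _ => by
    have : 0 ≤ (x - 1) / (x - 1 + 2) := div_nonneg (by linarith) (by linarith)
    positivity
  refine (Eq.le ?_).trans hfirst
  norm_num
  ring

lemma exp_le_inv_one_sub {t : ℝ} (ht : t < 1) : exp t ≤ (1 - t)⁻¹ := by
  rw [← inv_inv (exp t), ← exp_neg]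
  exact inv_anti₀ (sub_pos.mpr ht) (one_sub_le_exp_neg t)

lemma rpow_div_sub_one_eq_mul_exp {x : ℝ} (hx : 0 < x) (hx1 : x ≠ 1) :
    x ^ (x / (x - 1)) = x * exp (log x / (x - 1)) := by
  have hsub : x - 1 ≠ 0 := sub_ne_zero.mpr hx1
  have hexponent : log x * (x / (x - 1)) = log x + log x / (x - 1) := by
    field_simp
    ring
  rw [rpow_def_of_pos hx, hexponent, exp_add, exp_log hx]

lemma four_mul_div_add_one_sq_le_mul_two_sub {x u : ℝ} (hx : 0 ≤ x) (hu : 2 / (x + 1) ≤ u)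
    (hu1 : u ≤ 1) : 4 * x / (x + 1) ^ 2 ≤ u * (2 - u) := by
  have hx1 : 0 < x + 1 := by linarith
  have h1u : 1 - u ≤ (x - 1) / (x + 1) := by
    rw [div_le_iff₀ hx1] at hu
    rw [le_div_iff₀ hx1]
    linarith
  calc 4 * x / (x + 1) ^ 2 = 1 - ((x - 1) / (x + 1)) ^ 2 := by
        field_simp
        ring
    _ ≤ 1 - (1 - u) ^ 2 := by gcongr
    _ = u * (2 - u) := by ring

theorem specht_reformulation (x : ℝ) (hx : 1 < x) :
    (x - 1) * x ^ (x / (x - 1)) / (Real.exp 1 * Real.log x) ≤ ((x + 1) / 2) ^ 2 := by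
  have hx0 : 0 < x := by linarith
  have hsub : 0 < x - 1 := by linarith
  set u := log x / (x - 1) with hu_def
  have hu0 : 0 < u := div_pos (log_pos hx) hsub
  have hu1 : u < 1 := (div_lt_one hsub).mpr (log_lt_sub_one_of_pos hx0 hx.ne')
  have hu : 2 / (x + 1) ≤ u := by
    rw [hu_def, le_div_iff₀ hsub, div_mul_eq_mul_div]
    exact two_mul_sub_one_div_add_one_le_log hx.le
  have hlog : log x = u * (x - 1) := by rw [hu_def, div_mul_cancel₀ _ hsub.ne']
  calc (x - 1) * x ^ (x / (x - 1)) / (exp 1 * log x) = x * exp (u - 1) / u := by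
        rw [rpow_div_sub_one_eq_mul_exp hx0 hx.ne', hlog, exp_sub]
        field_simp
    _ ≤ x * (2 - u)⁻¹ / u := by
        gcongr
        simpa only [show 1 - (u - 1) = 2 - u by ring] using
          exp_le_inv_one_sub (t := u - 1) (by linarith)
    _ = x / (u * (2 - u)) := by field_simp
    _ ≤ x / (4 * x / (x + 1) ^ 2) := by
        gcongr
        exact four_mul_div_add_one_sq_le_mul_two_sub hx0.le hu hu1.le
    _ = ((x + 1) / 2) ^ 2 := by
        field_simp
        norm_num
end

section
/- For every real x > 0 with x ≠ 1 and every real p with p < 0 or 1/2 ≤ p, and p ≠ 0, p ≠ 1, one has W_p(x,1) ≤ Â_p(x,1). -/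
open Real Set

/-! Substituting `x = exp (2u)` turns `x ^ r - 1` into `2 exp (ru) sinh (ru)`; after cancelling the
positive factor `exp u * p sinh u / sinh (pu)` the inequality becomes
`q sinh u / sinh (qu) ≤ cosh (pu)` with `q = 1 - p`. The product formula
`2 cosh (pu) sinh (qu) = sinh u + sinh (cu)`, `c = 2q - 1`, reduces this to
`sinh (qu) (c sinh u - sinh (cu)) ≤ 0`, which is a sign check once one knows that for `u ≥ 0`,
convexity of `sinh` on `[0, ∞)` gives `sinh (cu) ≤ c sinh u` for `0 ≤ c ≤ 1` and the reverse
inequality for `c ≥ 1`. -/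

lemma convexOn_sinh_Ici : ConvexOn ℝ (Ici 0) sinh := by
  refine MonotoneOn.convexOn_of_deriv (convex_Ici 0) continuous_sinh.continuousOn
    differentiable_sinh.differentiableOn ?_
  rw [Real.deriv_sinh, interior_Ici]
  exact cosh_strictMonoOn.monotoneOn.mono Ioi_subset_Ici_self

lemma sinh_mul_le_mul_sinh {c u : ℝ} (hc₀ : 0 ≤ c) (hc₁ : c ≤ 1) (hu : 0 ≤ u) :
    sinh (c * u) ≤ c * sinh u := by
  simpa using convexOn_sinh_Ici.2 hu self_mem_Ici hc₀ (sub_nonneg.2 hc₁) (add_sub_cancel c 1)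

lemma mul_sinh_le_sinh_mul {c u : ℝ} (hc : 1 ≤ c) (hu : 0 ≤ u) :
    c * sinh u ≤ sinh (c * u) := by
  have hc₀ : 0 < c := one_pos.trans_le hc
  have h := sinh_mul_le_mul_sinh (inv_nonneg.2 hc₀.le) (inv_le_one_of_one_le₀ hc)
    (mul_nonneg hc₀.le hu)
  rw [inv_mul_cancel_left₀ hc₀.ne'] at h
  rwa [le_inv_mul_iff₀ hc₀] at h

lemma sinh_mul_mul_sub_sinh_nonpos {q : ℝ} (hq : q ≤ 1 / 2 ∨ 1 ≤ q) (u : ℝ) :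
    sinh (q * u) * ((2 * q - 1) * sinh u - sinh ((2 * q - 1) * u)) ≤ 0 := by
  wlog hu : 0 ≤ u generalizing u
  · have h := this (-u) (by linarith)
    simp only [mul_neg, sinh_neg] at h
    linear_combination h
  rcases hq with hq | hq
  · rcases le_total q 0 with hq₀ | hq₀
    · refine mul_nonpos_of_nonpos_of_nonneg
        (sinh_nonpos_iff.2 (mul_nonpos_of_nonpos_of_nonneg hq₀ hu)) ?_
      have := mul_sinh_le_sinh_mul (c := -(2 * q - 1)) (by linarith) hu
      simp only [neg_mul, sinh_neg] at this
      linarith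
    · refine mul_nonpos_of_nonneg_of_nonpos (sinh_nonneg_iff.2 (mul_nonneg hq₀ hu)) ?_
      have := sinh_mul_le_mul_sinh (c := -(2 * q - 1)) (by linarith) (by linarith) hu
      simp only [neg_mul, sinh_neg] at this
      linarith
  · refine mul_nonpos_of_nonneg_of_nonpos (sinh_nonneg_iff.2 (mul_nonneg (by linarith) hu)) ?_
    linarith [mul_sinh_le_sinh_mul (c := 2 * q - 1) (by linarith) hu]

lemma two_mul_cosh_mul_sinh (x y : ℝ) :
    2 * (cosh x * sinh y) = sinh (y + x) + sinh (y - x) := by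
  rw [sinh_add, sinh_sub]; ring

lemma mul_sinh_div_sinh_mul_le_cosh {q : ℝ} (hq : q ≤ 1 / 2 ∨ 1 ≤ q) (u : ℝ) :
    q * sinh u / sinh (q * u) ≤ cosh ((1 - q) * u) := by
  rcases eq_or_ne (sinh (q * u)) 0 with hs | hs
  · rw [hs, div_zero]
    exact (cosh_pos _).le
  rw [← mul_div_mul_right _ _ hs, div_le_iff₀ (mul_self_pos.2 hs)]
  have hprod : 2 * (cosh ((1 - q) * u) * sinh (q * u)) = sinh u + sinh ((2 * q - 1) * u) := by
    rw [two_mul_cosh_mul_sinh]; ring_nf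
  linear_combination sinh_mul_mul_sub_sinh_nonpos hq u / 2 - sinh (q * u) / 2 * hprod

lemma mul_sinh_div_sinh_mul_pos {p u : ℝ} (hp : p ≠ 0) (hu : u ≠ 0) :
    0 < p * sinh u / sinh (p * u) := by
  rcases hp.lt_or_gt with hp | hp <;> rcases hu.lt_or_gt with hu | hu
  · exact div_pos (mul_pos_of_neg_of_neg hp (sinh_neg_iff.2 hu))
      (sinh_pos_iff.2 (mul_pos_of_neg_of_neg hp hu))
  · exact div_pos_of_neg_of_neg (mul_neg_of_neg_of_pos hp (sinh_pos_iff.2 hu))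
      (sinh_neg_iff.2 (mul_neg_of_neg_of_pos hp hu))
  · exact div_pos_of_neg_of_neg (mul_neg_of_pos_of_neg hp (sinh_neg_iff.2 hu))
      (sinh_neg_iff.2 (mul_neg_of_pos_of_neg hp hu))
  · exact div_pos (mul_pos hp (sinh_pos_iff.2 hu)) (sinh_pos_iff.2 (mul_pos hp hu))

lemma exp_two_mul_sub_one (a : ℝ) : exp (2 * a) - 1 = 2 * exp a * sinh a := by
  rw [sinh_eq, exp_neg, two_mul, exp_add]
  field_simp

lemma exp_two_mul_add_one (a : ℝ) : exp (2 * a) + 1 = 2 * exp a * cosh a := by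
  rw [cosh_eq, exp_neg, two_mul, exp_add]
  field_simp

theorem wyd_le_hatA (x p : ℝ) (hx : 0 < x) (hx1 : x ≠ 1)
    (hp : p < 0 ∨ 1 / 2 ≤ p) (hp0 : p ≠ 0) (hp1 : p ≠ 1) :
    p * (1 - p) * (x - 1) ^ 2 / ((x ^ p - 1) * (x ^ (1 - p) - 1)) ≤
      p * (x ^ p + 1) * (x - 1) / (2 * (x ^ p - 1)) := by
  obtain ⟨u, hu, rfl⟩ : ∃ u ≠ 0, x = exp (2 * u) :=
    ⟨log x / 2, div_ne_zero (log_ne_zero_of_pos_of_ne_one hx hx1) two_ne_zero,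
      by rw [mul_div_cancel₀ _ two_ne_zero, exp_log hx]⟩
  have hK := mul_sinh_div_sinh_mul_le_cosh (q := 1 - p)
    (hp.symm.imp (fun _ => by linarith) fun _ => by linarith) u
  rw [sub_sub_cancel] at hK
  have hsp : sinh (p * u) ≠ 0 := sinh_ne_zero.2 (mul_ne_zero hp0 hu)
  have hsq : sinh ((1 - p) * u) ≠ 0 := sinh_ne_zero.2 (mul_ne_zero (sub_ne_zero.2 hp1.symm) hu)
  have hexp : exp u = exp (p * u) * exp ((1 - p) * u) := by rw [← exp_add]; ring_nf
  have hrpow (r : ℝ) : exp (2 * u) ^ r = exp (2 * (r * u)) := by rw [← exp_mul]; ring_nf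
  simp only [hrpow, exp_two_mul_sub_one, exp_two_mul_add_one]
  calc _ = exp u * (p * sinh u / sinh (p * u)) * ((1 - p) * sinh u / sinh ((1 - p) * u)) := by
          rw [hexp]; field_simp
    _ ≤ exp u * (p * sinh u / sinh (p * u)) * cosh (p * u) := by
          gcongr
          exact (mul_pos (exp_pos u) (mul_sinh_div_sinh_mul_pos hp0 hu)).le
    _ = _ := by rw [hexp]; field_simp
end
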